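/- Suppose the rule R is subcritical. Then for every γ ∈ ℝ the set {τ ∈ 𝔗∘ : |τ|_𝔰 < γ} of strongly conforming trees of 𝔰-degree less than γ is finite. -/

import Mathlib

open MeasureTheory
open scoped Classical

noncomputable section

namespace RS

inductive Typ : Type
  | Xi : Typ
  | In : Typ
deriving DecidableEq

/-- multi-indices `ℕ^d` -/
abbrev Nd (d : ℕ) := Fin d → ℕ

/-- edge types `ℰ = 𝔏 × ℕ^d` -/
abbrev ET (d : ℕ) := Typ × Nd d

/-- Decorated rooted trees (with an extended decoration `a : ℝ` at each node),
in the symbolic representation `𝟏^a X^k Ξ_L ∏_{(m,τ) ∈ B} 𝓘_m[τ]`. -/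
inductive Tr (d : ℕ) : Type
  | node (a : ℝ) (k : Nd d) (L : List (Nd d)) (B : List (Nd d × Tr d)) : Tr d

namespace Tr

instance {d} : DecidableEq (Tr d) := Classical.decEq _

variable {d : ℕ}

/-- the tree product: join roots, add root decorations -/
def mul : Tr d → Tr d → Tr d
  | node a k L B, node a' k' L' B' => node (a + a') (k + k') (L ++ L') (B ++ B')

/-- the unit tree `𝟏` -/
def one (d : ℕ) : Tr d := node 0 0 [] []

/-- `X^k` -/
def Xpow (k : Nd d) : Tr d := node 0 k [] []

/-- `Ξ_l` -/
def Xi (l : Nd d) : Tr d := node 0 0 [l] []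

/-- `𝓘_m[τ]` -/
def plant (m : Nd d) (τ : Tr d) : Tr d := node 0 0 [] [(m, τ)]

/-- `𝟏^a` -/
def oneA (a : ℝ) : Tr d := node a 0 [] []

/-- the `𝔰`-degree of a multi-index -/
def degN (s : Fin d → ℝ) (k : Nd d) : ℝ := ∑ i, (k i : ℝ) * s i

mutual
  /-- the degree `|τ|_𝔰` (ignoring the extended decoration) -/
  def deg (s : Fin d → ℝ) (cXi cI : ℝ) : Tr d → ℝ
    | node _ k L B => degN s k + (L.map fun l => cXi - degN s l).sum + degB s cXi cI B
  def degB (s : Fin d → ℝ) (cXi cI : ℝ) : List (Nd d × Tr d) → ℝ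
    | [] => 0
    | y :: ys => (deg s cXi cI y.2 + cI - degN s y.1) + degB s cXi cI ys
end

mutual
  /-- sum of all extended decorations in a tree -/
  def oSum : Tr d → ℝ
    | node a _ _ B => a + oSumB B
  def oSumB : List (Nd d × Tr d) → ℝ
    | [] => 0
    | y :: ys => oSum y.2 + oSumB ys
end

/-- the degree `|τ|₊ = |τ|_𝔰 + Σ_x 𝔬(x)` -/
def degp (s : Fin d → ℝ) (cXi cI : ℝ) (τ : Tr d) : ℝ := deg s cXi cI τ + oSum τ

/-- trees all of whose extended decorations vanish (identified with the
trees of the reduced structure) -/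
inductive ZeroO : Tr d → Prop
  | node {k : Nd d} {L : List (Nd d)} {B : List (Nd d × Tr d)} :
      (∀ y ∈ B, ZeroO y.2) → ZeroO (node 0 k L B)

/-- the multiset `𝒩(τ)` of edge decorations at the root -/
def rootN : Tr d → Multiset (ET d)
  | node _ _ L B =>
      (↑(L.map fun l => ((Typ.Xi, l) : ET d)) : Multiset (ET d)) +
      (↑(B.map fun y => ((Typ.In, y.1) : ET d)) : Multiset (ET d))

/-- the polynomial decoration at the root -/
def rootK : Tr d → Nd d
  | node _ k _ _ => k

/-- the extended decoration at the root -/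
def rootO : Tr d → ℝ
  | node a _ _ _ => a

/-- planted trees: `𝟏^a Ξ_l` or `𝟏^a 𝓘_m[σ]` -/
def Planted : Tr d → Prop
  | node _ k L B => k = 0 ∧ L.length + B.length = 1

/-- a tree strongly conforms to a rule `R` if the multiset of outgoing edge
decorations at every node belongs to `R` -/
inductive Conforms (R : Set (Multiset (ET d))) : Tr d → Prop
  | node {a : ℝ} {k : Nd d} {L : List (Nd d)} {B : List (Nd d × Tr d)} :
      rootN (node a k L B) ∈ R → (∀ y ∈ B, Conforms R y.2) →
      Conforms R (node a k L B)

end Tr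

/-- a rule is normal if it is closed under sub-multisets -/
def Normal {d : ℕ} (R : Set (Multiset (ET d))) : Prop :=
  ∀ A B : Multiset (ET d), A ≤ B → B ∈ R → A ∈ R

/-- `reg(N) = Σ_{(𝔱,k) ∈ N} (reg(𝔱) - |k|_𝔰)` -/
def regMS {d : ℕ} (s : Fin d → ℝ) (reg : Typ → ℝ) (N : Multiset (ET d)) : ℝ :=
  (N.map fun o => reg o.1 - Tr.degN s o.2).sum

/-- subcriticality of a rule: there is `reg : 𝔏 → ℝ` with `reg(Ξ) < |Ξ|_𝔰` and
`reg(𝓘) < |𝓘|_𝔰 + inf_{N ∈ R} reg(N)` -/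
def Subcritical {d : ℕ} (s : Fin d → ℝ) (cXi cI : ℝ) (R : Set (Multiset (ET d))) : Prop :=
  ∃ reg : Typ → ℝ, reg Typ.Xi < cXi ∧
    ∃ c : ℝ, (∀ N ∈ R, c ≤ regMS s reg N) ∧ reg Typ.In < cI + c

end RS

/-!
Subcriticality provides `reg`, a lower bound `c` for `reg` on `R` and a margin `ε > 0` with
`reg(Ξ) + ε ≤ |Ξ|_𝔰` and `reg(𝓘) + ε ≤ |𝓘|_𝔰 + c`. Induction over a conforming tree gives
`|τ|_𝔰 ≥ c + ε · #edges(τ) + Σ_x |𝔫(x)|_𝔰`, so trees of degree `< γ` have a bounded number of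
edges and bounded node decorations. At each node `reg(𝒩(x)) ≥ c` then bounds the edge decorations
by the number of edges, and there are only finitely many trees of bounded size whose decorations
lie in a finite set.
-/

theorem Set.Finite.lists_length_le {α : Type*} {s : Set α} (hs : s.Finite) (n : ℕ) :
    {l : List α | l.length ≤ n ∧ ∀ x ∈ l, x ∈ s}.Finite := by
  have : Finite s := hs.to_subtype
  refine ((List.finite_length_le s n).image (List.map Subtype.val)).subset ?_
  rintro l ⟨hlen, hmem⟩
  exact ⟨l.attach.map fun x => ⟨x.1, hmem x.1 x.2⟩, by simpa using hlen, by simp⟩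

namespace RS

namespace Tr

variable {d : ℕ}

theorem sizeOf_lt_of_mem {a : ℝ} {k : Nd d} {L : List (Nd d)} {B : List (Nd d × Tr d)}
    {y : Nd d × Tr d} (hy : y ∈ B) : sizeOf y.2 < sizeOf (node a k L B) := by
  have := List.sizeOf_lt_of_mem hy
  obtain ⟨m, σ⟩ := y
  simp only [node.sizeOf_spec, Prod.mk.sizeOf_spec] at this ⊢
  omega

@[elab_as_elim]
theorem induction_on {P : Tr d → Prop}
    (node : ∀ a k L B, (∀ y ∈ B, P (Prod.snd y)) → P (node a k L B)) : ∀ τ, P τ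
  | .node a k L B => node a k L B fun y _ => induction_on node y.2
decreasing_by exact sizeOf_lt_of_mem ‹_›

def numEdges : Tr d → ℕ
  | node _ _ L B => L.length + (B.map fun y => 1 + numEdges y.2).sum
decreasing_by exact sizeOf_lt_of_mem ‹_›

def sumNodeDeg (s : Fin d → ℝ) : Tr d → ℝ
  | node _ k _ B => degN s k + (B.map fun y => sumNodeDeg s y.2).sum
decreasing_by exact sizeOf_lt_of_mem ‹_›

inductive DecorationsIn (F : Set (Nd d)) : Tr d → Prop
  | node {a : ℝ} {k : Nd d} {L : List (Nd d)} {B : List (Nd d × Tr d)} :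
      k ∈ F → (∀ l ∈ L, l ∈ F) → (∀ y ∈ B, y.1 ∈ F) → (∀ y ∈ B, DecorationsIn F y.2) →
      DecorationsIn F (node a k L B)

section Combinatorics

variable {a : ℝ} {k : Nd d} {L : List (Nd d)} {B : List (Nd d × Tr d)}

theorem length_add_length_le_numEdges : L.length + B.length ≤ numEdges (node a k L B) := by
  rw [numEdges]
  have := List.length_le_sum_of_one_le (B.map fun y => 1 + numEdges y.2)
    (by simp only [List.mem_map]; rintro _ ⟨y, -, rfl⟩; omega)
  simp only [List.length_map] at this
  omega

theorem numEdges_lt_of_mem {y : Nd d × Tr d} (hy : y ∈ B) :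
    numEdges y.2 < numEdges (node a k L B) := by
  rw [numEdges]
  have := List.le_sum_of_mem (List.mem_map_of_mem (f := fun y => 1 + numEdges y.2) hy)
  omega

theorem card_rootN_le_numEdges :
    Multiset.card (rootN (node a k L B)) ≤ numEdges (node a k L B) := by
  simpa [rootN] using length_add_length_le_numEdges

theorem mem_rootN_of_mem_left {l : Nd d} (hl : l ∈ L) : (Typ.Xi, l) ∈ rootN (node a k L B) := by
  simp [rootN, hl]

theorem mem_rootN_of_mem_right {y : Nd d × Tr d} (hy : y ∈ B) :
    (Typ.In, y.1) ∈ rootN (node a k L B) := by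
  simp only [rootN, Multiset.mem_add, Multiset.mem_coe, List.mem_map]
  exact Or.inr ⟨y, hy, rfl⟩

end Combinatorics

theorem finite_setOf_numEdges_lt {F : Set (Nd d)} (hF : F.Finite) (n : ℕ) :
    {τ : Tr d | ZeroO τ ∧ numEdges τ < n ∧ DecorationsIn F τ}.Finite := by
  induction n with
  | zero => simp
  | succ n ih =>
    refine ((hF.prod ((hF.lists_length_le n).prod ((hF.prod ih).lists_length_le n))).image
      fun p => node 0 p.1 p.2.1 p.2.2).subset ?_
    rintro ⟨a, k, L, B⟩ ⟨⟨hzero⟩, hn, ⟨hk, hL, hB₁, hB₂⟩⟩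
    have hlen := length_add_length_le_numEdges (a := 0) (k := k) (L := L) (B := B)
    have hL_len : L.length ≤ n := by omega
    have hB_len : B.length ≤ n := by omega
    have hchild (y) (hy : y ∈ B) : numEdges y.2 < n :=
      (numEdges_lt_of_mem (a := 0) (k := k) (L := L) hy).trans_le (Nat.lt_succ_iff.1 hn)
    exact ⟨(k, L, B), ⟨hk, ⟨hL_len, hL⟩, hB_len,
      fun y hy => ⟨hB₁ y hy, hzero y hy, hchild y hy, hB₂ y hy⟩⟩, rfl⟩

section Degrees

variable {s : Fin d → ℝ}

theorem degN_nonneg (hs : ∀ i, 0 ≤ s i) (k : Nd d) : 0 ≤ degN s k :=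
  Finset.sum_nonneg fun i _ => mul_nonneg (Nat.cast_nonneg _) (hs i)

theorem finite_setOf_degN_le (hs : ∀ i, 0 < s i) (K : ℝ) :
    {k : Nd d | degN s k ≤ K}.Finite := by
  refine (Set.Finite.pi fun i => Set.finite_Iic ⌊K / s i⌋₊).subset fun k hk i _ => ?_
  have hki : (k i : ℝ) * s i ≤ degN s k :=
    Finset.single_le_sum (f := fun j => (k j : ℝ) * s j)
      (fun j _ => mul_nonneg (Nat.cast_nonneg _) (hs j).le) (Finset.mem_univ i)
  exact Nat.le_floor ((le_div_iff₀ (hs i)).2 (hki.trans hk))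

theorem sumNodeDeg_nonneg (hs : ∀ i, 0 ≤ s i) (τ : Tr d) : 0 ≤ sumNodeDeg s τ := by
  induction τ using induction_on with
  | node a k L B ih =>
    rw [sumNodeDeg]
    exact add_nonneg (degN_nonneg hs k) (List.sum_nonneg (List.forall_mem_map.2 ih))

variable {a : ℝ} {k : Nd d} {L : List (Nd d)} {B : List (Nd d × Tr d)}

theorem degN_le_sumNodeDeg (hs : ∀ i, 0 ≤ s i) : degN s k ≤ sumNodeDeg s (node a k L B) := by
  rw [sumNodeDeg]
  exact le_add_of_nonneg_right
    (List.sum_nonneg (List.forall_mem_map.2 fun y _ => sumNodeDeg_nonneg hs y.2))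

theorem sumNodeDeg_le_of_mem (hs : ∀ i, 0 ≤ s i) {y : Nd d × Tr d} (hy : y ∈ B) :
    sumNodeDeg s y.2 ≤ sumNodeDeg s (node a k L B) := by
  rw [sumNodeDeg]
  have := List.single_le_sum (List.forall_mem_map.2 fun y _ => sumNodeDeg_nonneg hs y.2) _
    (List.mem_map_of_mem (f := fun y => sumNodeDeg s y.2) hy)
  linarith [degN_nonneg hs k]

end Degrees

theorem regMS_rootN (s : Fin d → ℝ) (reg : Typ → ℝ) (a : ℝ) (k : Nd d) (L : List (Nd d))
    (B : List (Nd d × Tr d)) :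
    regMS s reg (rootN (node a k L B)) =
      (L.map fun l => reg Typ.Xi - degN s l).sum +
        (B.map fun y => reg Typ.In - degN s y.1).sum := by
  simp [regMS, rootN, List.map_map, Function.comp_def]

theorem degB_eq_sum (s : Fin d → ℝ) (cXi cI : ℝ) (B : List (Nd d × Tr d)) :
    degB s cXi cI B = (B.map fun y => deg s cXi cI y.2 + cI - degN s y.1).sum := by
  induction B with
  | nil => rfl
  | cons y B ih => rw [degB, ih, List.map_cons, List.sum_cons]

theorem le_deg_of_conforms {s : Fin d → ℝ} {cXi cI c ε : ℝ} {reg : Typ → ℝ}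
    {R : Set (Multiset (ET d))} (hc : ∀ N ∈ R, c ≤ regMS s reg N)
    (hXi : reg Typ.Xi + ε ≤ cXi) (hI : reg Typ.In + ε ≤ cI + c) {τ : Tr d}
    (hτ : Conforms R τ) : c + ε * numEdges τ + sumNodeDeg s τ ≤ deg s cXi cI τ := by
  induction τ using induction_on with
  | node a k L B ih =>
    obtain ⟨hN, hB⟩ := hτ
    have hL : (L.map fun l => reg Typ.Xi - degN s l + ε).sum ≤
        (L.map fun l => cXi - degN s l).sum :=
      List.sum_le_sum fun l _ => by linarith
    have hB : (B.map fun y =>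
          reg Typ.In - degN s y.1 + (ε * (1 + numEdges y.2) + sumNodeDeg s y.2)).sum ≤
        (B.map fun y => deg s cXi cI y.2 + cI - degN s y.1).sum :=
      List.sum_le_sum fun y hy => by linarith [ih y hy (hB y hy)]
    have hroot := regMS_rootN s reg a k L B ▸ hc _ hN
    rw [deg, degB_eq_sum, numEdges, sumNodeDeg]
    push_cast [Nat.cast_list_sum, List.map_map, Function.comp_def]
    simp only [List.sum_map_add, List.sum_map_mul_left, List.map_const', List.sum_replicate,
      nsmul_eq_mul] at hL hB ⊢
    linarith

theorem degN_le_of_le_regMS {s : Fin d → ℝ} (hs : ∀ i, 0 ≤ s i) {reg : Typ → ℝ} {c M : ℝ}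
    (hM : ∀ t, reg t ≤ M) {N : Multiset (ET d)} (hN : c ≤ regMS s reg N) {o : ET d}
    (ho : o ∈ N) : degN s o.2 ≤ Multiset.card N * M - c := by
  have hsum : (N.map fun o => degN s o.2).sum ≤ Multiset.card N * M - c := by
    have : regMS s reg N ≤ (N.map fun o => M - degN s o.2).sum :=
      Multiset.sum_map_le_sum_map _ _ fun o _ => by linarith [hM o.1]
    rw [Multiset.sum_map_sub, Multiset.map_const', Multiset.sum_replicate, nsmul_eq_mul] at this
    linarith
  exact (Multiset.single_le_sum (Multiset.forall_mem_map_iff.2 fun o _ => degN_nonneg hs o.2) _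
    (Multiset.mem_map_of_mem _ ho)).trans hsum

theorem decorationsIn_of_conforms {s : Fin d → ℝ} (hs : ∀ i, 0 ≤ s i) {reg : Typ → ℝ}
    {c M : ℝ} {R : Set (Multiset (ET d))} (hc : ∀ N ∈ R, c ≤ regMS s reg N)
    (hM : ∀ t, reg t ≤ M) (hM₀ : 0 ≤ M) {n K : ℝ} {τ : Tr d} (hτ : Conforms R τ)
    (hn : numEdges τ ≤ n) (hK : sumNodeDeg s τ ≤ K) :
    DecorationsIn {k | degN s k ≤ max K (n * M - c)} τ := by
  induction τ using induction_on with
  | node a k L B ih =>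
    obtain ⟨hN, hB⟩ := hτ
    have hedge {o : ET d} (ho : o ∈ rootN (node a k L B)) : degN s o.2 ≤ max K (n * M - c) := by
      have hcard : (Multiset.card (rootN (node a k L B)) : ℝ) ≤ n :=
        (Nat.cast_le.2 card_rootN_le_numEdges).trans hn
      refine le_max_of_le_right ((degN_le_of_le_regMS hs hM (hc _ hN) ho).trans ?_)
      linarith [mul_le_mul_of_nonneg_right hcard hM₀]
    refine ⟨le_max_of_le_left ((degN_le_sumNodeDeg hs).trans hK),
      fun l hl => hedge (mem_rootN_of_mem_left hl), fun y hy => hedge (mem_rootN_of_mem_right hy),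
      fun y hy => ih y hy (hB y hy) ?_ ((sumNodeDeg_le_of_mem hs hy).trans hK)⟩
    exact (Nat.cast_le.2 (numEdges_lt_of_mem hy).le).trans hn

end Tr

theorem Subcritical.exists_margin {d : ℕ} {s : Fin d → ℝ} {cXi cI : ℝ}
    {R : Set (Multiset (ET d))} (h : Subcritical s cXi cI R) :
    ∃ (reg : Typ → ℝ) (c ε : ℝ), 0 < ε ∧ (∀ N ∈ R, c ≤ regMS s reg N) ∧
      reg Typ.Xi + ε ≤ cXi ∧ reg Typ.In + ε ≤ cI + c := by
  obtain ⟨reg, hXi, c, hc, hI⟩ := h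
  refine ⟨reg, c, min (cXi - reg Typ.Xi) (cI + c - reg Typ.In), lt_min (by linarith) (by linarith),
    hc, ?_, ?_⟩
  · linarith [min_le_left (cXi - reg Typ.Xi) (cI + c - reg Typ.In)]
  · linarith [min_le_right (cXi - reg Typ.Xi) (cI + c - reg Typ.In)]

/-- If the rule `R` is subcritical, then for every `γ ∈ ℝ` the set
of strongly conforming trees of `𝔰`-degree less than `γ` is finite. -/
theorem subcritical_finitely_many_trees
    {d : ℕ} (hd : 0 < d) (s : Fin d → ℝ) (hs : ∀ i, 1 ≤ s i)
    (cXi cI : ℝ) (hXi : cXi < 0) (hI : 0 < cI)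
    (R : Set (Multiset (ET d))) (hsub : Subcritical s cXi cI R) (γ : ℝ) :
    {τ : Tr d | Tr.ZeroO τ ∧ Tr.Conforms R τ ∧ Tr.deg s cXi cI τ < γ}.Finite := by
  obtain ⟨reg, c, ε, hε, hc, hregXi, hregI⟩ := hsub.exists_margin
  set M := max (max (reg Typ.Xi) (reg Typ.In)) 0
  have hM (t : Typ) : reg t ≤ M := by cases t <;> simp [M]
  set r := (γ - c) / ε
  have hs₀ (i : Fin d) : 0 ≤ s i := zero_le_one.trans (hs i)
  refine (Tr.finite_setOf_numEdges_lt (Tr.finite_setOf_degN_le (fun i => one_pos.trans_le (hs i))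
    (max (γ - c) (r * M - c))) (⌊r⌋₊ + 1)).subset ?_
  rintro τ ⟨hzero, hτ, hdeg⟩
  have hlower := Tr.le_deg_of_conforms hc hregXi hregI hτ
  have hε_edges : 0 ≤ ε * Tr.numEdges τ := by positivity
  have hnodes : Tr.sumNodeDeg s τ ≤ γ - c := by linarith
  have hedges : (Tr.numEdges τ : ℝ) ≤ r :=
    (le_div_iff₀' hε).2 (by linarith [Tr.sumNodeDeg_nonneg hs₀ τ])
  exact ⟨hzero, Nat.lt_succ_of_le (Nat.le_floor hedges),
    Tr.decorationsIn_of_conforms hs₀ hc hM (le_max_right _ _) hτ hedges hnodes⟩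

end RS
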